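/- If a quasi-transitive graph G₁ satisfies σₙ^{(1)} ≥ μ₁ⁿ for all n (where μ₁ is its connective constant), then the number σₙ of SAWs of length n in any free product G = G₁ * G₂ * ⋯ satisfies σₙ ≥ μ₁^{n−1}·(1 + μ₁^{−1})^{⌊n/2⌋ − 1} for all n ≥ 2. -/

import Mathlib

open Filter Topology

/-- A valid word in the free product: letters are non-root vertices of the factors,
no two consecutive letters from the same factor. -/
def ValidWord {r : ℕ} {V : Fin r → Type} (o : ∀ i, V i) (l : List (Σ i, V i)) : Prop :=
  (∀ x ∈ l, x.2 ≠ o x.1) ∧ l.Chain' (fun a b => a.1 ≠ b.1)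

/-- The vertex set of the free product of rooted graphs: the set of valid words. -/
def FPV {r : ℕ} (V : Fin r → Type) (o : ∀ i, V i) : Type :=
  {l : List (Σ i, V i) // ValidWord o l}

/-- The edge relation of the free product on raw words: `w x` is adjacent to `w y`
whenever `x, y` belong to the same factor (where `x` or `y` may be the root, i.e.
the empty extension) and are adjacent there. -/
def RawAdj {r : ℕ} {V : Fin r → Type} (G : ∀ i, SimpleGraph (V i)) (o : ∀ i, V i) :
    List (Σ i, V i) → List (Σ i, V i) → Prop := fun a b =>
  (∃ (w : List (Σ i, V i)) (i : Fin r) (x y : V i),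
      (G i).Adj x y ∧ a = w ++ [⟨i, x⟩] ∧ b = w ++ [⟨i, y⟩])
  ∨ (∃ (i : Fin r) (y : V i), (G i).Adj (o i) y ∧ b = a ++ [⟨i, y⟩])
  ∨ (∃ (i : Fin r) (y : V i), (G i).Adj (o i) y ∧ a = b ++ [⟨i, y⟩])

/-- The free product `G₁ * ⋯ * G_r` of rooted graphs. -/
def freeProd {r : ℕ} {V : Fin r → Type} (G : ∀ i, SimpleGraph (V i)) (o : ∀ i, V i) :
    SimpleGraph (FPV V o) :=
  SimpleGraph.fromRel (fun a b => RawAdj G o a.1 b.1)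

/-- The root (empty word) of the free product. -/
def fpRoot {r : ℕ} (V : Fin r → Type) (o : ∀ i, V i) : FPV V o :=
  ⟨[], fun x hx => absurd hx List.not_mem_nil, List.IsChain.nil⟩

/-- `sawCount G v n` is the number of self-avoiding walks of length `n` in `G` starting at `v`,
i.e. paths `[v₀, …, vₙ]` with `v₀ = v`, consecutive vertices adjacent, and no repeated vertex. -/
noncomputable def sawCount {V : Type*} (G : SimpleGraph V) (v : V) (n : ℕ) : ℕ :=
  Set.ncard {l : List V | l.length = n + 1 ∧ l.head? = some v ∧ l.Chain' G.Adj ∧ l.Nodup}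

/-- A graph is quasi-transitive if its automorphism group acts with finitely many orbits. -/
def QuasiTransitive {V : Type*} (G : SimpleGraph V) : Prop :=
  ∃ s : Finset V, ∀ v : V, ∃ φ : G ≃g G, φ v ∈ s

/-- A graph is locally finite if every vertex has finitely many neighbours. -/
def LocFinite {V : Type*} (G : SimpleGraph V) : Prop := ∀ v, (G.neighborSet v).Finite

/-- `sawCountVia G o i n` counts self-avoiding walks of length `n` in the free product
starting at the root whose first step enters the copy of the `i`-th factor
(equivalently, which visit `Vᵢ \ {oᵢ}`). -/
noncomputable def sawCountVia {r : ℕ} {V : Fin r → Type} (G : ∀ i, SimpleGraph (V i))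
    (o : ∀ i, V i) (i : Fin r) (n : ℕ) : ℕ :=
  Set.ncard {l : List (FPV V o) |
    l.length = n + 1 ∧ l.head? = some (fpRoot V o) ∧ l.Chain' (freeProd G o).Adj ∧ l.Nodup ∧
    ∃ (v : FPV V o) (x : V i), l[1]? = some v ∧ v.1 = [⟨i, x⟩]}

/-!
Concatenate self-avoiding walks of `G i₀`: each block is a SAW from the root in a fresh copy of
`G i₀`, and consecutive blocks are joined by one step into a copy of `G j`, `j ≠ i₀`, whose far
end is the root of the next copy of `G i₀`. Since the free product is tree-like, such a
concatenation is self-avoiding and determines its blocks. Read a walk of length `n` as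
`k = ⌊n/2⌋ - 1` pairs of steps followed by the remaining `n - 2k ≥ 1` steps; each pair either
closes the current block (one step in `G i₀`, one into `G j`) or extends it by two steps. A
pattern with `b` breaks yields `∏ σ_{aᵢ} ≥ μ₁^{n-b}` walks, and summing over the `2^k` patterns
gives `μ₁^{n-2k} (μ₁² + μ₁)^k = μ₁ⁿ (1 + μ₁⁻¹)^k`. Finally `μ₁ = 0` or `μ₁ ≥ 1`, because
`σₙ ≥ μ₁ⁿ > 0` forces `σₙ^{1/n} ≥ 1`.
-/

section SelfAvoidingWalks

variable {W : Type*} (H : SimpleGraph W)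

def sawSet (v : W) (n : ℕ) : Set (List W) :=
  {l | l.length = n + 1 ∧ l.head? = some v ∧ l.IsChain H.Adj ∧ l.Nodup}

lemma sawCount_eq_ncard_sawSet (v : W) (n : ℕ) : sawCount H v n = (sawSet H v n).ncard := rfl

def sawTails (v : W) (n : ℕ) : Set (List W) :=
  {t | t.length = n ∧ (v :: t).IsChain H.Adj ∧ (v :: t).Nodup}

lemma sawSet_eq_image_sawTails (v : W) (n : ℕ) :
    sawSet H v n = List.cons v '' sawTails H v n := by
  ext l
  constructor
  · rintro ⟨hlen, hhead, hchain, hnodup⟩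
    obtain ⟨t, rfl⟩ := List.head?_eq_some_iff.mp hhead
    exact ⟨t, ⟨by simpa using hlen, hchain, hnodup⟩, rfl⟩
  · rintro ⟨t, ⟨hlen, hchain, hnodup⟩, rfl⟩
    exact ⟨by simp [hlen], rfl, hchain, hnodup⟩

lemma sawCount_eq_ncard_sawTails (v : W) (n : ℕ) :
    sawCount H v n = (sawTails H v n).ncard := by
  rw [sawCount_eq_ncard_sawSet, sawSet_eq_image_sawTails,
    Set.ncard_image_of_injective _ List.cons_injective]

lemma finite_setOf_isChain_cons (hH : LocFinite H) (n : ℕ) (v : W) :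
    {t : List W | t.length = n ∧ (v :: t).IsChain H.Adj}.Finite := by
  induction n generalizing v with
  | zero => exact (Set.finite_singleton []).subset fun t ht => List.length_eq_zero_iff.mp ht.1
  | succ n ih =>
    refine ((hH v).biUnion fun x _ => (ih x).image (List.cons x)).subset ?_
    rintro (_ | ⟨x, t⟩) ⟨hlen, hchain⟩
    · simp at hlen
    · rw [List.isChain_cons_cons] at hchain
      exact Set.mem_biUnion hchain.1 ⟨t, ⟨by simpa using hlen, hchain.2⟩, rfl⟩

lemma finite_sawTails (hH : LocFinite H) (v : W) (n : ℕ) : (sawTails H v n).Finite :=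
  (finite_setOf_isChain_cons H hH n v).subset fun _ ht => ⟨ht.1, ht.2.1⟩

lemma finite_sawSet (hH : LocFinite H) (v : W) (n : ℕ) : (sawSet H v n).Finite := by
  rw [sawSet_eq_image_sawTails]
  exact (finite_sawTails H hH v n).image _

end SelfAvoidingWalks

section FreeProduct

variable {r : ℕ} {V : Fin r → Type}

lemma RawAdj.ne {G : ∀ i, SimpleGraph (V i)} {o : ∀ i, V i} {a b : List (Σ i, V i)}
    (h : RawAdj G o a b) : a ≠ b := by
  rcases h with ⟨w, i, x, y, hxy, rfl, rfl⟩ | ⟨i, y, -, rfl⟩ | ⟨i, y, -, rfl⟩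
  · simpa using hxy.ne
  · simp
  · simp

lemma ValidWord.concat {o : ∀ i, V i} {w : List (Σ i, V i)} {a : Σ i, V i} (hw : ValidWord o w)
    (ha : a.2 ≠ o a.1) (hlast : ∀ z ∈ w.getLast?, z.1 ≠ a.1) : ValidWord o (w ++ [a]) := by
  refine ⟨fun x hx => ?_, List.isChain_append.mpr ⟨hw.2, List.isChain_singleton a, ?_⟩⟩
  · rcases List.mem_append.mp hx with hx | hx
    · exact hw.1 x hx
    · rw [List.mem_singleton.mp hx]; exact ha
  · simpa using hlast

variable (G : ∀ i, SimpleGraph (V i)) (o : ∀ i, V i)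

lemma freeProd_adj_of_rawAdj {a b : FPV V o} (h : RawAdj G o a.1 b.1) : (freeProd G o).Adj a b :=
  (SimpleGraph.fromRel_adj _ _ _).mpr ⟨fun hab => h.ne (congrArg Subtype.val hab), Or.inl h⟩

lemma freeProd_locFinite (hlf : ∀ i, LocFinite (G i)) : LocFinite (freeProd G o) := by
  rintro ⟨a, -⟩
  set Y : Set (Σ i, V i) := ⋃ z ∈ {z | z ∈ a} ∪ Set.range (fun i => (⟨i, o i⟩ : Σ i, V i)),
    Sigma.mk z.1 '' (G z.1).neighborSet z.2
  have hY : Y.Finite :=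
    (a.finite_toSet.union (Set.finite_range _)).biUnion fun z _ => (hlf z.1 z.2).image _
  have hN : ({a.dropLast} ∪ (a.dropLast ++ [·]) '' Y ∪ (a ++ [·]) '' Y : Set _).Finite :=
    ((Set.finite_singleton _).union (hY.image _)).union (hY.image _)
  refine (hN.preimage Subtype.val_injective.injOn).subset ?_
  rintro ⟨b, _⟩ hab
  simp only [freeProd] at hab
  obtain ⟨-, (⟨w, i, x, y, hxy, rfl, rfl⟩ | ⟨i, y, hy, rfl⟩ | ⟨i, y, -, rfl⟩) |
    (⟨w, i, x, y, hxy, rfl, rfl⟩ | ⟨i, y, -, rfl⟩ | ⟨i, y, hy, rfl⟩)⟩ := hab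
  · exact Or.inl (Or.inr
      ⟨⟨i, y⟩, Set.mem_biUnion (x := ⟨i, x⟩) (by simp) ⟨y, hxy, rfl⟩, by simp⟩)
  · exact Or.inr ⟨⟨i, y⟩, Set.mem_biUnion (x := ⟨i, o i⟩) (by simp) ⟨y, hy, rfl⟩, rfl⟩
  · exact Or.inl (Or.inl (by simp))
  · exact Or.inl (Or.inr
      ⟨⟨i, x⟩, Set.mem_biUnion (x := ⟨i, y⟩) (by simp) ⟨x, hxy.symm, rfl⟩, by simp⟩)
  · exact Or.inl (Or.inl (by simp))
  · exact Or.inr ⟨⟨i, y⟩, Set.mem_biUnion (x := ⟨i, o i⟩) (by simp) ⟨y, hy, rfl⟩, rfl⟩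

lemma mem_image_sawSet_freeProd {n : ℕ} {p : List (List (Σ i, V i))}
    (hval : ∀ u ∈ p, ValidWord o u) (hlen : p.length = n + 1) (hhead : p.head? = some [])
    (hchain : p.IsChain (RawAdj G o)) (hnodup : p.Nodup) :
    p ∈ List.map Subtype.val '' sawSet (freeProd G o) (fpRoot V o) n := by
  refine ⟨p.attachWith _ hval, ⟨by simpa using hlen, ?_, ?_, ?_⟩, List.unattach_attachWith⟩
  · obtain ⟨p, rfl⟩ := List.head?_eq_some_iff.mp hhead
    rfl
  · exact (List.isChain_attachWith hval).mpr
      (hchain.imp_of_mem_imp fun a b ha hb hab =>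
        ⟨hval a ha, hval b hb, freeProd_adj_of_rawAdj G o hab⟩)
  · exact List.Nodup.of_map Subtype.val (by simpa using hnodup)

end FreeProduct

namespace List

lemma getLastD_map_of_ne_nil {α β : Type*} (f : α → β) {l : List α} (hl : l ≠ []) (d : β) :
    (l.map f).getLastD d = f (l.getLast hl) := by
  simp [getLast?_eq_some_getLast hl]

lemma append_inj_of_forall_not {α : Type*} (p : α → Prop) {A₁ A₂ B₁ B₂ : List α}
    (hA₁ : ∀ a ∈ A₁, p a) (hA₂ : ∀ a ∈ A₂, p a) (hB₁ : ∀ b ∈ B₁, ¬p b) (hB₂ : ∀ b ∈ B₂, ¬p b)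
    (h : A₁ ++ B₁ = A₂ ++ B₂) : A₁ = A₂ ∧ B₁ = B₂ := by
  classical
  have key : ∀ A B : List α, (∀ a ∈ A, p a) → (∀ b ∈ B, ¬p b) →
      (A ++ B).takeWhile (fun a => decide (p a)) = A := by
    intro A B hA hB
    rw [takeWhile_append_of_pos (by simpa using hA)]
    cases B with
    | nil => simp
    | cons b B => simp [hB b (by simp)]
  have hA : A₁ = A₂ := by rw [← key A₁ B₁ hA₁ hB₁, ← key A₂ B₂ hA₂ hB₂, h]
  subst hA
  exact ⟨rfl, append_cancel_left h⟩

end List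

section BlockWalk

variable {r : ℕ} {V : Fin r → Type} {i j : Fin r} (y : V j)

/-- `blockWalk y w [t₁, …, tₖ]` runs from `w` through the SAW `o i :: t₁` in the copy of `G i`
hung at `w`, steps from its end into the copy of `G j` to `y`, runs through `o i :: t₂` in the
copy of `G i` hung there, and so on. -/
def blockWalk : List (Σ i, V i) → List (List (V i)) → List (List (Σ i, V i))
  | _, [] => []
  | w, t :: L =>
      (w :: t.map fun x => w ++ [⟨i, x⟩]) ++
        blockWalk ((t.map fun x => w ++ [⟨i, x⟩]).getLastD w ++ [⟨j, y⟩]) L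

variable {y}

lemma blockWalk_cons (w : List (Σ i, V i)) {t : List (V i)} (ht : t ≠ [])
    (L : List (List (V i))) :
    blockWalk y w (t :: L) = (w :: t.map fun x => w ++ [⟨i, x⟩]) ++
      blockWalk y (w ++ [⟨i, t.getLast ht⟩] ++ [⟨j, y⟩]) L := by
  rw [blockWalk, List.getLastD_map_of_ne_nil _ ht]

lemma head?_blockWalk (w : List (Σ i, V i)) (L : List (List (V i))) :
    ∀ u ∈ (blockWalk y w L).head?, u = w := by
  cases L <;> simp [blockWalk]

lemma length_blockWalk (w : List (Σ i, V i)) (L : List (List (V i))) :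
    (blockWalk y w L).length = (L.map (·.length + 1)).sum := by
  induction L generalizing w with
  | nil => rfl
  | cons t L ih => simp [blockWalk, ih]; omega

lemma length_le_of_mem_blockWalk {w u : List (Σ i, V i)} {L : List (List (V i))}
    (hL : ∀ t ∈ L, t ≠ []) (hu : u ∈ blockWalk y w L) : w.length ≤ u.length := by
  induction L generalizing w with
  | nil => simp [blockWalk] at hu
  | cons t L ih =>
    rw [blockWalk_cons w (hL t (by simp))] at hu
    rcases List.mem_append.mp hu with hu | hu
    · rcases List.mem_cons.mp hu with rfl | hu
      · rfl
      · obtain ⟨x, -, rfl⟩ := List.mem_map.mp hu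
        simp
    · have := ih (fun s hs => hL s (by simp [hs])) hu
      simp at this
      omega

lemma nodup_blockWalk (w : List (Σ i, V i)) {L : List (List (V i))}
    (hL : ∀ t ∈ L, t ≠ [] ∧ t.Nodup) : (blockWalk y w L).Nodup := by
  induction L generalizing w with
  | nil => exact List.nodup_nil
  | cons t L ih =>
    obtain ⟨ht, htnd⟩ := hL t (by simp)
    have hL' : ∀ s ∈ L, s ≠ [] ∧ s.Nodup := fun s hs => hL s (by simp [hs])
    rw [blockWalk_cons w ht, List.nodup_append, List.nodup_cons]
    refine ⟨⟨by simp, htnd.map fun x x' h => by simpa using h⟩, ih _ hL', ?_⟩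
    intro u hu v hv huv
    have hv := length_le_of_mem_blockWalk (fun s hs => (hL' s hs).1) hv
    rcases List.mem_cons.mp hu with rfl | hu
    · simp [← huv] at hv
    · obtain ⟨x, -, rfl⟩ := List.mem_map.mp hu
      simp [← huv] at hv

lemma blockWalk_injective {w : List (Σ i, V i)} {L₁ L₂ : List (List (V i))}
    (h₁ : ∀ t ∈ L₁, t ≠ []) (h₂ : ∀ t ∈ L₂, t ≠ []) (h : blockWalk y w L₁ = blockWalk y w L₂) :
    L₁ = L₂ := by
  induction L₁ generalizing w L₂ with
  | nil => cases L₂ <;> simp_all [blockWalk]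
  | cons t₁ L₁ ih =>
    cases L₂ with
    | nil => simp [blockWalk] at h
    | cons t₂ L₂ =>
      have ht₁ := h₁ t₁ (by simp)
      have ht₂ := h₂ t₂ (by simp)
      rw [blockWalk_cons w ht₁, blockWalk_cons w ht₂] at h
      have hfirst : ∀ t : List (V i), ∀ u ∈ (w :: t.map fun x => w ++ [⟨i, x⟩]),
          u.length ≤ w.length + 1 := by
        intro t u hu
        rcases List.mem_cons.mp hu with rfl | hu
        · omega
        · obtain ⟨x, -, rfl⟩ := List.mem_map.mp hu
          simp
      have hrest : ∀ (t : List (V i)) (ht : t ≠ []) (L : List (List (V i))), (∀ s ∈ L, s ≠ []) →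
          ∀ u ∈ blockWalk y (w ++ [⟨i, t.getLast ht⟩] ++ [⟨j, y⟩]) L,
            ¬u.length ≤ w.length + 1 := by
        intro t ht L hL u hu
        have := length_le_of_mem_blockWalk hL hu
        simp at this
        omega
      obtain ⟨hblock, htail⟩ := List.append_inj_of_forall_not _ (hfirst t₁) (hfirst t₂)
        (hrest t₁ ht₁ L₁ fun s hs => h₁ s (by simp [hs]))
        (hrest t₂ ht₂ L₂ fun s hs => h₂ s (by simp [hs])) h
      have ht : t₁ = t₂ :=
        List.map_injective_iff.mpr (fun x x' h => by simpa using h) (List.cons_injective hblock)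
      subst ht
      rw [ih (fun s hs => h₁ s (by simp [hs])) (fun s hs => h₂ s (by simp [hs])) htail]

variable (G : ∀ i, SimpleGraph (V i)) (o : ∀ i, V i)

lemma validWord_of_mem_blockWalk (hij : i ≠ j) (hy : y ≠ o j) {L : List (List (V i))}
    (hL : ∀ t ∈ L, t ≠ [] ∧ o i ∉ t) {w : List (Σ i, V i)} (hw : ValidWord o w)
    (hlast : ∀ z ∈ w.getLast?, z.1 ≠ i) : ∀ u ∈ blockWalk y w L, ValidWord o u := by
  induction L generalizing w with
  | nil => simp [blockWalk]
  | cons t L ih =>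
    obtain ⟨ht, hto⟩ := hL t (by simp)
    have hstep : ∀ x ∈ t, ValidWord o (w ++ [⟨i, x⟩]) := fun x hx =>
      hw.concat (fun h => hto (h ▸ hx)) hlast
    rw [blockWalk_cons w ht]
    intro u hu
    rcases List.mem_append.mp hu with hu | hu
    · rcases List.mem_cons.mp hu with rfl | hu
      · exact hw
      · obtain ⟨x, hx, rfl⟩ := List.mem_map.mp hu
        exact hstep x hx
    · refine ih (fun s hs => hL s (by simp [hs])) ?_ (by simpa using hij.symm) u hu
      exact (hstep _ (List.getLast_mem ht)).concat hy (by simpa using hij)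

lemma isChain_blockWalk (hy : (G j).Adj (o j) y) {L : List (List (V i))}
    (hL : ∀ t ∈ L, (o i :: t).IsChain (G i).Adj) (w : List (Σ i, V i)) :
    (blockWalk y w L).IsChain (RawAdj G o) := by
  induction L generalizing w with
  | nil => exact List.isChain_nil
  | cons t L ih =>
    have hblock : (w :: t.map fun x => w ++ [⟨i, x⟩]).IsChain (RawAdj G o) := by
      obtain _ | ⟨x, t⟩ := t
      · exact List.isChain_singleton w
      obtain ⟨hx, ht⟩ := List.isChain_cons_cons.mp (hL (x :: t) (by simp))
      refine List.isChain_cons_cons.mpr ⟨Or.inr (Or.inl ⟨i, x, hx, rfl⟩), ?_⟩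
      exact List.isChain_map_of_isChain (S := RawAdj G o) (fun x => w ++ [⟨i, x⟩])
        (fun a b hab => Or.inl ⟨w, i, a, b, hab, rfl, rfl⟩) ht
    refine List.isChain_append.mpr ⟨hblock, ih (fun s hs => hL s (by simp [hs])) _, ?_⟩
    intro a ha b hb
    rw [head?_blockWalk _ _ b hb]
    rw [List.getLast?_cons, Option.mem_some_iff] at ha
    subst ha
    exact Or.inr (Or.inl ⟨j, y, hy, by simp⟩)

end BlockWalk

lemma card_le_sawCount_freeProd {r : ℕ} {V : Fin r → Type} (G : ∀ i, SimpleGraph (V i))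
    (o : ∀ i, V i) (hlf : ∀ i, LocFinite (G i)) {i j : Fin r} (hij : i ≠ j) {y : V j}
    (hy : (G j).Adj (o j) y) {n : ℕ} (Γ : Finset (List (List (V i))))
    (hΓ : ∀ L ∈ Γ, (L.map (·.length + 1)).sum = n + 1 ∧
      ∀ t ∈ L, t ≠ [] ∧ t ∈ sawTails (G i) (o i) t.length) :
    Γ.card ≤ sawCount (freeProd G o) (fpRoot V o) n := by
  have hsub : blockWalk y [] '' (Γ : Set (List (List (V i)))) ⊆
      List.map Subtype.val '' sawSet (freeProd G o) (fpRoot V o) n := by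
    rintro _ ⟨L, hL, rfl⟩
    obtain ⟨hsum, hblocks⟩ := hΓ L hL
    obtain ⟨t, L, rfl⟩ := List.exists_cons_of_ne_nil (l := L) (by rintro rfl; simp at hsum)
    refine mem_image_sawSet_freeProd G o ?_ (by rw [length_blockWalk, hsum])
      (by simp [blockWalk]) (isChain_blockWalk G o hy (fun s hs => (hblocks s hs).2.2.1) [])
      (nodup_blockWalk _ fun s hs =>
        ⟨(hblocks s hs).1, (List.nodup_cons.mp (hblocks s hs).2.2.2).2⟩)
    exact validWord_of_mem_blockWalk o hij hy.ne'
      (fun s hs => ⟨(hblocks s hs).1, (List.nodup_cons.mp (hblocks s hs).2.2.2).1⟩)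
      ⟨by simp, List.isChain_nil⟩ (by simp)
  have hinj : Set.InjOn (blockWalk y []) (Γ : Set (List (List (V i)))) := fun L₁ h₁ L₂ h₂ h =>
    blockWalk_injective (fun t ht => ((hΓ L₁ h₁).2 t ht).1) (fun t ht => ((hΓ L₂ h₂).2 t ht).1) h
  calc Γ.card = (blockWalk y [] '' (Γ : Set (List (List (V i))))).ncard := by
        rw [hinj.ncard_image, Set.ncard_coe_finset]
    _ ≤ (List.map Subtype.val '' sawSet (freeProd G o) (fpRoot V o) n).ncard :=
        Set.ncard_le_ncard hsub ((finite_sawSet _ (freeProd_locFinite G o hlf) _ n).image _)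
    _ = sawCount (freeProd G o) (fpRoot V o) n := by
        rw [Set.ncard_image_of_injective _ (List.map_injective_iff.mpr Subtype.val_injective)]
        rfl

section BlockFamily

variable {W : Type*} [DecidableEq W] (T : ℕ → Finset (List W))

/-- With `T b` the blocks of `b` steps: the block lists of a walk of `a + 2k + m` steps read as
`k` pairs of steps followed by `m` more, where each pair either closes the current block (of `a`
steps so far) with one step and leaves it with the other, or extends it by two steps. -/
def blockFamily : ℕ → ℕ → ℕ → Finset (List (List W))
  | 0, a, m => (T (a + m)).map ⟨fun t => [t], List.singleton_injective⟩
  | k + 1, a, m => Finset.image₂ List.cons (T (a + 1)) (blockFamily k 0 m) ∪ blockFamily k (a + 2) m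

variable {T} (hT : ∀ b, ∀ t ∈ T b, t.length = b)
include hT

lemma exists_eq_cons_of_mem_blockFamily {k a m : ℕ} {L : List (List W)}
    (hL : L ∈ blockFamily T k a m) : ∃ t L', L = t :: L' ∧ a ≤ t.length := by
  induction k generalizing a L with
  | zero =>
    obtain ⟨t, ht, rfl⟩ := Finset.mem_map.mp hL
    exact ⟨t, [], rfl, by simp [hT _ t ht]⟩
  | succ k ih =>
    rcases Finset.mem_union.mp hL with hL | hL
    · obtain ⟨t, ht, L', -, rfl⟩ := Finset.mem_image₂.mp hL
      exact ⟨t, L', rfl, by simp [hT _ t ht]⟩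
    · obtain ⟨t, L', rfl, hle⟩ := ih hL
      exact ⟨t, L', rfl, by omega⟩

lemma mem_blockFamily {k a m : ℕ} (hm : 1 ≤ m) {L : List (List W)}
    (hL : L ∈ blockFamily T k a m) :
    (L.map (·.length + 1)).sum = a + 2 * k + m + 1 ∧ ∀ t ∈ L, t ≠ [] ∧ t ∈ T t.length := by
  induction k generalizing a L with
  | zero =>
    obtain ⟨t, ht, rfl⟩ := Finset.mem_map.mp hL
    have := hT _ t ht
    refine ⟨by simp [this], fun s hs => ?_⟩
    obtain rfl := List.mem_singleton.mp hs
    exact ⟨by rintro rfl; simp at this; omega, this ▸ ht⟩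
  | succ k ih =>
    rcases Finset.mem_union.mp hL with hL | hL
    · obtain ⟨t, ht, L', hL', rfl⟩ := Finset.mem_image₂.mp hL
      obtain ⟨hsum, hblocks⟩ := ih hL'
      have := hT _ t ht
      refine ⟨by simp [this, hsum]; ring, fun s hs => ?_⟩
      rcases List.mem_cons.mp hs with rfl | hs
      · exact ⟨by rintro rfl; simp at this, this ▸ ht⟩
      · exact hblocks s hs
    · obtain ⟨hsum, hblocks⟩ := ih hL
      exact ⟨by rw [hsum]; ring, hblocks⟩

lemma le_card_blockFamily {μ : ℝ} (hμ : 0 ≤ μ) (hσ : ∀ b, μ ^ b ≤ (T b).card) :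
    ∀ k a m, μ ^ (a + m) * (μ ^ 2 + μ) ^ k ≤ (blockFamily T k a m).card
  | 0, a, m => by simpa [blockFamily] using hσ (a + m)
  | k + 1, a, m => by
    have hdisj : Disjoint (Finset.image₂ List.cons (T (a + 1)) (blockFamily T k 0 m))
        (blockFamily T k (a + 2) m) := by
      refine Finset.disjoint_left.mpr fun L hL hL' => ?_
      obtain ⟨t, ht, L', -, rfl⟩ := Finset.mem_image₂.mp hL
      obtain ⟨_, _, h, hle⟩ := exists_eq_cons_of_mem_blockFamily hT hL'
      rw [(List.cons_eq_cons.mp h).1.symm, hT _ t ht] at hle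
      omega
    rw [blockFamily, Finset.card_union_of_disjoint hdisj,
      Finset.card_image₂ (fun _ _ _ _ => List.cons_eq_cons.mp), Nat.cast_add, Nat.cast_mul]
    calc μ ^ (a + m) * (μ ^ 2 + μ) ^ (k + 1)
        = μ ^ (a + 1) * (μ ^ (0 + m) * (μ ^ 2 + μ) ^ k) + μ ^ (a + 2 + m) * (μ ^ 2 + μ) ^ k := by
          ring
      _ ≤ _ := add_le_add (mul_le_mul (hσ _) (le_card_blockFamily hμ hσ k 0 m) (by positivity)
          (by positivity)) (le_card_blockFamily hμ hσ k (a + 2) m)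

end BlockFamily

lemma eq_zero_or_one_le_of_tendsto_rpow_inv {σ : ℕ → ℕ} {μ : ℝ}
    (hμ : Tendsto (fun n : ℕ => (σ n : ℝ) ^ ((n : ℝ)⁻¹)) atTop (𝓝 μ))
    (hσ : ∀ n, μ ^ n ≤ σ n) : μ = 0 ∨ 1 ≤ μ := by
  rcases (ge_of_tendsto' hμ fun n => by positivity).eq_or_lt with h | hpos
  · exact Or.inl h.symm
  refine Or.inr (ge_of_tendsto' hμ fun n => Real.one_le_rpow ?_ (by positivity))
  exact_mod_cast Nat.one_le_iff_ne_zero.mpr fun h => by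
    simpa [h] using (pow_pos hpos n).trans_le (hσ n)

theorem freeProd_saw_lower_bound_general {r : ℕ} (hr : 2 ≤ r)
    (V : Fin r → Type) (G : ∀ i, SimpleGraph (V i)) (o : ∀ i, V i)
    (hconn : ∀ i, (G i).Connected)
    (hlf : ∀ i, LocFinite (G i)) (hnt : ∀ i, Nontrivial (V i))
    (i₀ : Fin r) (μ₁ : ℝ)
    (hμ : Filter.Tendsto (fun n : ℕ => (sawCount (G i₀) (o i₀) n : ℝ) ^ ((n : ℝ)⁻¹))
      Filter.atTop (nhds μ₁))
    (hσ : ∀ n : ℕ, μ₁ ^ n ≤ (sawCount (G i₀) (o i₀) n : ℝ)) :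
    ∀ n : ℕ, 2 ≤ n →
      μ₁ ^ (n - 1) * (1 + μ₁⁻¹) ^ (n / 2 - 1)
        ≤ (sawCount (freeProd G o) (fpRoot V o) n : ℝ) := by
  intro n hn
  classical
  rcases eq_zero_or_one_le_of_tendsto_rpow_inv hμ hσ with rfl | hμ₁
  · rw [zero_pow (by omega), zero_mul]
    positivity
  have : Nontrivial (Fin r) := Fin.nontrivial_iff_two_le.mpr hr
  obtain ⟨j, hj⟩ := exists_ne i₀
  obtain ⟨y, hy⟩ := (hconn j).preconnected.exists_adj_of_nontrivial (o j)
  set k := n / 2 - 1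
  let T b := (finite_sawTails (G i₀) (hlf i₀) (o i₀) b).toFinset
  have hT : ∀ b, ∀ t ∈ T b, t.length = b := fun b t ht => ((Set.Finite.mem_toFinset _).mp ht).1
  have hσT : ∀ b, μ₁ ^ b ≤ (T b).card := fun b => by
    rw [← Set.ncard_eq_toFinset_card _ (finite_sawTails _ (hlf i₀) _ b),
      ← sawCount_eq_ncard_sawTails]
    exact hσ b
  have hpow : μ₁ ^ (n - 2 * k) * (μ₁ ^ 2 + μ₁) ^ k = μ₁ ^ n * (1 + μ₁⁻¹) ^ k := by
    rw [show μ₁ ^ 2 + μ₁ = μ₁ ^ 2 * (1 + μ₁⁻¹) by field_simp, mul_pow, ← pow_mul, ← mul_assoc,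
      pow_sub_mul_pow _ (by omega)]
  calc μ₁ ^ (n - 1) * (1 + μ₁⁻¹) ^ k ≤ μ₁ ^ n * (1 + μ₁⁻¹) ^ k := by
        gcongr
        omega
    _ ≤ (blockFamily T k 0 (n - 2 * k)).card := by
        simpa [hpow] using le_card_blockFamily hT (by positivity) hσT k 0 (n - 2 * k)
    _ ≤ sawCount (freeProd G o) (fpRoot V o) n := by
        refine Nat.cast_le.mpr (card_le_sawCount_freeProd G o hlf hj.symm hy _ fun L hL => ?_)
        obtain ⟨hsum, hblocks⟩ := mem_blockFamily hT (by omega) hL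
        exact ⟨by rw [hsum]; omega, fun t ht =>
          ⟨(hblocks t ht).1, (Set.Finite.mem_toFinset _).mp (hblocks t ht).2⟩⟩

/-- If a quasi-transitive factor `G_{i₀}` satisfies `σₙ^{(i₀)} ≥ μ₁ⁿ` for all `n`, where
`μ₁` is its connective constant, then the number `σₙ` of SAWs of length `n` in the free
product satisfies `σₙ ≥ μ₁^{n−1}·(1 + μ₁⁻¹)^{⌊n/2⌋−1}` for all `n ≥ 2`. -/
theorem freeProd_saw_lower_bound {r : ℕ} (hr : 2 ≤ r)
    (V : Fin r → Type) (G : ∀ i, SimpleGraph (V i)) (o : ∀ i, V i)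
    (hconn : ∀ i, (G i).Connected) (hqt : ∀ i, QuasiTransitive (G i))
    (hlf : ∀ i, LocFinite (G i)) (hnt : ∀ i, Nontrivial (V i))
    (i₀ : Fin r) (μ₁ : ℝ)
    (hμ : Filter.Tendsto (fun n : ℕ => (sawCount (G i₀) (o i₀) n : ℝ) ^ ((n : ℝ)⁻¹))
      Filter.atTop (nhds μ₁))
    (hσ : ∀ n : ℕ, μ₁ ^ n ≤ (sawCount (G i₀) (o i₀) n : ℝ)) :
    ∀ n : ℕ, 2 ≤ n →
      μ₁ ^ (n - 1) * (1 + μ₁⁻¹) ^ (n / 2 - 1)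
        ≤ (sawCount (freeProd G o) (fpRoot V o) n : ℝ) :=
  freeProd_saw_lower_bound_general hr V G o hconn hlf hnt i₀ μ₁ hμ hσ
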